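/- arXiv:1304.6233 — 2 statements merged into one kernel-verified Lean document; each statement's English description precedes it below -/
import Mathlib

section
/- The set of optimal solutions (Z*, L*) to the original LatLRR problem (minimize rank(Z) + rank(L) subject to X = X Z + L X) is exactly the set of pairs Z* = V_X W̃ V_Xᵀ + S₁ W̃ V_Xᵀ and L* = U_X Σ_X (I − W̃) Σ_X⁻¹ U_Xᵀ + U_X Σ_X (I − W̃) S₂, where W̃ ranges over all idempotent matrices of size rank(X), and S₁, S₂ are any matrices satisfying V_Xᵀ S₁ = 0, S₂ U_X = 0, rank(S₁) ≤ rank(W̃), and rank(S₂) ≤ rank(I − W̃). -/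
/-!
Every feasible pair has `rank Z + rank L ≥ rank (X Z) + rank (L X) ≥ rank X = r`, and `(V Vᵀ, 0)`
attains `r`, so the optimal pairs are the feasible ones with `rank Z + rank L ≤ r`.

For such a pair put `W = Vᵀ Z V`. Feasibility gives `Vᵀ Z = W Vᵀ` and `L U = U Σ (1 - W) Σ⁻¹`,
hence `rank W ≤ rank Z` and `rank (1 - W) ≤ rank L`. Since `rank W + rank (1 - W) ≥ r`, all these
inequalities are equalities, and `rank W + rank (1 - W) = r` forces `W` to be idempotent.
Equality of ranks also makes the column space of `L` that of `L U`, and the row space of `Z` that of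
`Vᵀ Z`; this is what writes the parts of `L` and `Z` orthogonal to `U` and `V` as `U Σ (1 - W) S₂`
and `S₁ W Vᵀ`. Conversely, every pair of that form is feasible with ranks bounded by
`rank W + rank (1 - W) = r`.
-/

open Matrix

/-- The nuclear norm of a real matrix: the sum of its singular values,
i.e. the sum of the square roots of the eigenvalues of `Aᵀ * A`. -/
noncomputable def nuclearNorm {m n : Type*} [Fintype m] [Fintype n] [DecidableEq n]
    (A : Matrix m n ℝ) : ℝ :=
  ∑ i, Real.sqrt ((Matrix.isHermitian_conjTranspose_mul_self A).eigenvalues i)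

/-- `P` is the Moore–Penrose pseudo-inverse of `X`. -/
def IsMoorePenroseInv {m n : Type*} [Fintype m] [Fintype n]
    (X : Matrix m n ℝ) (P : Matrix n m ℝ) : Prop :=
  X * P * X = X ∧ P * X * P = P ∧ (X * P)ᵀ = X * P ∧ (P * X)ᵀ = P * X

/-- `(U, σ, V)` is a skinny SVD of `X`: `U` and `V` have orthonormal columns,
`σ` lists the (positive) nonzero singular values, `X = U * diagonal σ * Vᵀ`,
and the number of columns of `U` and `V` is `rank X`. -/
def IsSkinnySVD {m n r : ℕ} (X : Matrix (Fin m) (Fin n) ℝ)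
    (U : Matrix (Fin m) (Fin r) ℝ) (σ : Fin r → ℝ) (V : Matrix (Fin n) (Fin r) ℝ) : Prop :=
  Uᵀ * U = 1 ∧ Vᵀ * V = 1 ∧ (∀ i, 0 < σ i) ∧
    X = U * Matrix.diagonal σ * Vᵀ ∧ r = X.rank

namespace Matrix

variable {K l m n p : Type*} [Field K] [Fintype m] [Fintype n]

theorem rank_add_le [Fintype l] (A B : Matrix l m K) : (A + B).rank ≤ A.rank + B.rank := by
  rw [rank, rank, rank, mulVecLin_add]
  exact (Submodule.finrank_mono (LinearMap.range_add_le _ _)).trans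
    (Submodule.finrank_add_le_finrank_add_finrank _ _)

theorem rank_le_rank_add_rank_of_eq_mul_add_mul {X : Matrix m n K} {Z : Matrix n n K}
    {L : Matrix m m K} (h : X = X * Z + L * X) : X.rank ≤ Z.rank + L.rank :=
  calc X.rank = (X * Z + L * X).rank := by rw [← h]
    _ ≤ (X * Z).rank + (L * X).rank := rank_add_le _ _
    _ ≤ Z.rank + L.rank := add_le_add (rank_mul_le_right _ _) (rank_mul_le_left _ _)

theorem range_mulVecLin_mul_le (A : Matrix l m K) (B : Matrix m n K) :
    LinearMap.range (A * B).mulVecLin ≤ LinearMap.range A.mulVecLin := by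
  rw [mulVecLin_mul]
  exact LinearMap.range_comp_le_range _ _

theorem exists_eq_mul_of_range_le [Fintype p] [DecidableEq p] {A : Matrix l m K}
    {C : Matrix l p K}
    (h : LinearMap.range C.mulVecLin ≤ LinearMap.range A.mulVecLin) :
    ∃ T : Matrix m p K, C = A * T := by
  choose t ht using fun j : p => h ⟨Pi.single j 1, rfl⟩
  refine ⟨(of t)ᵀ, ext_of_mulVec_single fun j => ?_⟩
  rw [← mulVec_mulVec, mulVec_single_one (of t)ᵀ]
  exact (ht j).symm

theorem exists_mul_eq_mul_mul_of_rank_mul_eq [Fintype l] [Fintype p] [DecidableEq p]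
    {A : Matrix l m K} {B : Matrix m n K} (h : (A * B).rank = A.rank) (C : Matrix m p K) :
    ∃ T : Matrix n p K, A * C = A * B * T := by
  have hrange := Submodule.eq_of_le_of_finrank_eq (range_mulVecLin_mul_le A B) h
  exact exists_eq_mul_of_range_le ((range_mulVecLin_mul_le A C).trans hrange.ge)

theorem card_le_rank_add_rank_one_sub [DecidableEq n] (W : Matrix n n K) :
    Fintype.card n ≤ W.rank + (1 - W).rank := by
  simpa using rank_add_le W (1 - W)

theorem isIdempotentElem_iff_rank_add_rank_one_sub [DecidableEq n] {W : Matrix n n K} :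
    IsIdempotentElem W ↔ W.rank + (1 - W).rank = Fintype.card n := by
  refine ⟨fun hW => le_antisymm (rank_add_rank_le_card_of_mul_eq_zero hW.mul_one_sub_self)
    (card_le_rank_add_rank_one_sub W), fun h => ?_⟩
  have hker : LinearMap.ker W.mulVecLin ≤ LinearMap.range (1 - W).mulVecLin :=
    fun x hx => ⟨x, by simpa [sub_mulVec] using hx⟩
  have hrange : LinearMap.range (1 - W).mulVecLin = LinearMap.ker W.mulVecLin := by
    refine (Submodule.eq_of_le_of_finrank_le hker ?_).symm
    have := W.mulVecLin.finrank_range_add_finrank_ker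
    simp only [Module.finrank_fintype_fun_eq_card] at this
    change (1 - W).rank ≤ _
    rw [rank] at h
    omega
  have hzero : W * (1 - W) = 0 := ext_of_mulVec_single fun j => by
    rw [zero_mulVec, ← mulVec_mulVec]
    exact hrange.le ⟨Pi.single j 1, rfl⟩
  exact isIdempotentElem_iff_mul_one_sub_self.mpr hzero

variable {r : Type*} [Fintype r] [DecidableEq r]

theorem exists_eq_mul_mul_transpose_add_of_mul_eq [DecidableEq m] {U : Matrix m r K}
    {Q : Matrix r r K} {L : Matrix m m K} (hU : Uᵀ * U = 1) (hQ : IsIdempotentElem Q)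
    (hLU : L * U = U * Q) (hrank : L.rank ≤ Q.rank) :
    ∃ T : Matrix r m K, T * U = 0 ∧ T.rank ≤ Q.rank ∧ L = U * Q * Uᵀ + U * Q * T := by
  have hLU_rank : (L * U).rank = L.rank := by
    refine le_antisymm (rank_mul_le_left _ _) (hrank.trans ?_)
    calc Q.rank = (Uᵀ * (L * U)).rank := by
          rw [hLU, ← Matrix.mul_assoc, hU, Matrix.one_mul]
      _ ≤ (L * U).rank := rank_mul_le_right _ _
  obtain ⟨T, hT⟩ := exists_mul_eq_mul_mul_of_rank_mul_eq hLU_rank (1 - U * Uᵀ)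
  have hP : IsIdempotentElem (1 - U * Uᵀ) := IsIdempotentElem.one_sub <| by
    rw [IsIdempotentElem, Matrix.mul_assoc, ← Matrix.mul_assoc Uᵀ, hU, Matrix.one_mul]
  have hPU : (1 - U * Uᵀ) * U = 0 := by
    rw [Matrix.sub_mul, Matrix.one_mul, Matrix.mul_assoc, hU, Matrix.mul_one, sub_self]
  refine ⟨Q * T * (1 - U * Uᵀ), by rw [Matrix.mul_assoc, hPU, Matrix.mul_zero],
    (rank_mul_le_left _ _).trans (rank_mul_le_left _ _), ?_⟩
  calc L = L * U * Uᵀ + L * (1 - U * Uᵀ) * (1 - U * Uᵀ) := by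
        rw [Matrix.mul_assoc L (1 - U * Uᵀ), hP.eq, Matrix.mul_sub, Matrix.mul_one,
          Matrix.mul_assoc, add_sub_cancel]
    _ = U * Q * Uᵀ + U * Q * (Q * T * (1 - U * Uᵀ)) := by
        rw [hT, hLU, ← Matrix.mul_assoc (U * Q), ← Matrix.mul_assoc (U * Q),
          Matrix.mul_assoc U Q Q, hQ.eq]

theorem exists_eq_mul_mul_transpose_add_of_transpose_mul_eq [DecidableEq n]
    {V : Matrix n r K} {W : Matrix r r K} {Z : Matrix n n K} (hV : Vᵀ * V = 1)
    (hW : IsIdempotentElem W) (hVZ : Vᵀ * Z = W * Vᵀ) (hrank : Z.rank ≤ W.rank) :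
    ∃ S : Matrix n r K, Vᵀ * S = 0 ∧ S.rank ≤ W.rank ∧ Z = V * W * Vᵀ + S * W * Vᵀ := by
  have hWt : IsIdempotentElem Wᵀ := by rw [IsIdempotentElem, ← transpose_mul, hW.eq]
  have hZV : Zᵀ * V = V * Wᵀ := by
    rw [← transpose_transpose V, ← transpose_mul, hVZ, transpose_mul, transpose_transpose]
  obtain ⟨T, hTV, hT, hZ⟩ := exists_eq_mul_mul_transpose_add_of_mul_eq hV hWt hZV
    (by rwa [rank_transpose, rank_transpose])
  refine ⟨Tᵀ, by rw [← transpose_mul, hTV, transpose_zero],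
    by rwa [rank_transpose, ← rank_transpose W], ?_⟩
  simpa [transpose_mul, transpose_add, Matrix.mul_assoc] using congrArg transpose hZ

end Matrix

section LatLRR

variable {K m n r : Type*} [Field K] [Fintype m] [Fintype n] [Fintype r] [DecidableEq r]
variable {U : Matrix m r K} {S : Matrix r r K} {V : Matrix n r K}
  {Z : Matrix n n K} {L : Matrix m m K}

theorem transpose_mul_eq_of_eq_mul_add_mul (hU : Uᵀ * U = 1) (hS : IsUnit S.det)
    (hV : Vᵀ * V = 1) (h : U * S * Vᵀ = U * S * Vᵀ * Z + L * (U * S * Vᵀ)) :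
    Vᵀ * Z = Vᵀ * Z * V * Vᵀ := by
  have hXV : U * S * Vᵀ * (V * Vᵀ) = U * S * Vᵀ := by
    rw [Matrix.mul_assoc (U * S), ← Matrix.mul_assoc Vᵀ, hV, Matrix.one_mul]
  have hXZ : U * S * Vᵀ * Z * (V * Vᵀ) = U * S * Vᵀ * Z := by
    rw [eq_sub_of_add_eq h.symm, Matrix.sub_mul, hXV, Matrix.mul_assoc L, hXV]
  have hcancel (A : Matrix r n K) : S⁻¹ * (Uᵀ * (U * (S * A))) = A := by
    rw [← Matrix.mul_assoc Uᵀ, hU, Matrix.one_mul, nonsing_inv_mul_cancel_left _ _ hS]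
  simpa only [Matrix.mul_assoc, hcancel] using (congrArg (S⁻¹ * Uᵀ * ·) hXZ).symm

theorem mul_eq_of_eq_mul_add_mul (hU : Uᵀ * U = 1) (hS : IsUnit S.det)
    (hV : Vᵀ * V = 1) (h : U * S * Vᵀ = U * S * Vᵀ * Z + L * (U * S * Vᵀ)) :
    L * U = U * S * (1 - Vᵀ * Z * V) * S⁻¹ := by
  have hVZ := transpose_mul_eq_of_eq_mul_add_mul hU hS hV h
  set W := Vᵀ * Z * V
  have hLX : L * (U * S * Vᵀ) = U * S * (1 - W) * Vᵀ := by
    rw [eq_sub_of_add_eq' h.symm, Matrix.mul_assoc (U * S) Vᵀ Z, hVZ]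
    simp only [Matrix.mul_sub, Matrix.sub_mul, Matrix.mul_one, Matrix.mul_assoc]
  calc L * U = L * (U * S * Vᵀ) * (V * S⁻¹) := by
        rw [Matrix.mul_assoc L, Matrix.mul_assoc (U * S), ← Matrix.mul_assoc Vᵀ, hV,
          Matrix.one_mul, mul_nonsing_inv_cancel_right _ _ hS]
    _ = U * S * (1 - W) * S⁻¹ := by
        rw [hLX, Matrix.mul_assoc _ Vᵀ, ← Matrix.mul_assoc Vᵀ, hV, Matrix.one_mul]

theorem eq_mul_add_mul_of_latLRR_form (hU : Uᵀ * U = 1) (hS : IsUnit S.det) (hV : Vᵀ * V = 1)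
    (W : Matrix r r K) {S₁ : Matrix n r K} {S₂ : Matrix r m K} (hS₁ : Vᵀ * S₁ = 0)
    (hS₂ : S₂ * U = 0) :
    U * S * Vᵀ = U * S * Vᵀ * (V * W * Vᵀ + S₁ * W * Vᵀ) +
      (U * S * (1 - W) * S⁻¹ * Uᵀ + U * S * (1 - W) * S₂) * (U * S * Vᵀ) := by
  have hXZ : U * S * Vᵀ * (V * W * Vᵀ + S₁ * W * Vᵀ) = U * S * W * Vᵀ := by
    simp only [Matrix.mul_add, Matrix.mul_assoc, ← Matrix.mul_assoc Vᵀ, hV, hS₁,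
      Matrix.one_mul, Matrix.zero_mul, Matrix.mul_zero, add_zero]
  have hLX : (U * S * (1 - W) * S⁻¹ * Uᵀ + U * S * (1 - W) * S₂) * (U * S * Vᵀ) =
      U * S * (1 - W) * Vᵀ := by
    simp only [Matrix.add_mul, Matrix.mul_assoc, ← Matrix.mul_assoc Uᵀ, ← Matrix.mul_assoc S₂,
      hU, hS₂, Matrix.one_mul, Matrix.zero_mul, Matrix.mul_zero, add_zero,
      nonsing_inv_mul_cancel_left _ _ hS]
  rw [hXZ, hLX, ← Matrix.add_mul, ← Matrix.mul_add, add_sub_cancel, Matrix.mul_one]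

theorem rank_add_rank_le_of_latLRR_form {W : Matrix r r K}
    (hW : IsIdempotentElem W) (S₁ : Matrix n r K) (S₂ : Matrix r m K) :
    (V * W * Vᵀ + S₁ * W * Vᵀ).rank +
      (U * S * (1 - W) * S⁻¹ * Uᵀ + U * S * (1 - W) * S₂).rank ≤ Fintype.card r := by
  have hZ : (V * W * Vᵀ + S₁ * W * Vᵀ).rank ≤ W.rank := by
    rw [← Matrix.add_mul, ← Matrix.add_mul]
    exact (rank_mul_le_left _ _).trans (rank_mul_le_right _ _)
  have hL : (U * S * (1 - W) * S⁻¹ * Uᵀ + U * S * (1 - W) * S₂).rank ≤ (1 - W).rank := by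
    rw [Matrix.mul_assoc _ S⁻¹, ← Matrix.mul_add]
    exact (rank_mul_le_left _ _).trans (rank_mul_le_right _ _)
  have := isIdempotentElem_iff_rank_add_rank_one_sub.mp hW
  omega

theorem exists_latLRR_form_of_eq_mul_add_mul [DecidableEq m] [DecidableEq n] (hU : Uᵀ * U = 1)
    (hS : IsUnit S.det) (hV : Vᵀ * V = 1)
    (h : U * S * Vᵀ = U * S * Vᵀ * Z + L * (U * S * Vᵀ))
    (hrank : Z.rank + L.rank ≤ Fintype.card r) :
    ∃ (W : Matrix r r K) (S₁ : Matrix n r K) (S₂ : Matrix r m K),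
      W * W = W ∧ Vᵀ * S₁ = 0 ∧ S₂ * U = 0 ∧ S₁.rank ≤ W.rank ∧ S₂.rank ≤ (1 - W).rank ∧
      Z = V * W * Vᵀ + S₁ * W * Vᵀ ∧
      L = U * S * (1 - W) * S⁻¹ * Uᵀ + U * S * (1 - W) * S₂ := by
  have hVZ := transpose_mul_eq_of_eq_mul_add_mul hU hS hV h
  have hLU := mul_eq_of_eq_mul_add_mul hU hS hV h
  set W := Vᵀ * Z * V
  set Q := S * (1 - W) * S⁻¹
  have hWZ : W.rank ≤ Z.rank := (rank_mul_le_left _ _).trans (rank_mul_le_right _ _)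
  have hQL : Q.rank ≤ L.rank := by
    calc Q.rank = (Uᵀ * (L * U)).rank := by
          rw [hLU, Matrix.mul_assoc U, Matrix.mul_assoc U, ← Matrix.mul_assoc Uᵀ, hU,
            Matrix.one_mul]
      _ ≤ L.rank := (rank_mul_le_right _ _).trans (rank_mul_le_left _ _)
  have hQ_rank : Q.rank = (1 - W).rank := by
    rw [rank_mul_eq_left_of_isUnit_det _ _ (isUnit_nonsing_inv_det _ hS),
      rank_mul_eq_right_of_isUnit_det _ _ hS]
  have hsum := card_le_rank_add_rank_one_sub W
  have hW : IsIdempotentElem W :=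
    isIdempotentElem_iff_rank_add_rank_one_sub.mpr (le_antisymm (by omega) hsum)
  have hQ : IsIdempotentElem Q := by
    simp only [Q, IsIdempotentElem, Matrix.mul_assoc, nonsing_inv_mul_cancel_left _ _ hS]
    rw [← Matrix.mul_assoc (1 - W), hW.one_sub.eq]
  obtain ⟨S₁, hS₁, hS₁_rank, hZ⟩ :=
    exists_eq_mul_mul_transpose_add_of_transpose_mul_eq hV hW hVZ (by omega)
  obtain ⟨T, hT, hT_rank, hL⟩ :=
    exists_eq_mul_mul_transpose_add_of_mul_eq hU hQ (by rw [hLU]; simp only [Q, Matrix.mul_assoc])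
      (by omega)
  refine ⟨W, S₁, S⁻¹ * T, hW.eq, hS₁, by rw [Matrix.mul_assoc, hT, Matrix.mul_zero],
    hS₁_rank, ?_, hZ, ?_⟩
  · rw [rank_mul_eq_right_of_isUnit_det _ _ (isUnit_nonsing_inv_det _ hS)]
    omega
  · rw [hL]
    simp only [Q, Matrix.mul_assoc]

end LatLRR

theorem stmt6_general {m n r : ℕ} (X : Matrix (Fin m) (Fin n) ℝ)
    (UX : Matrix (Fin m) (Fin r) ℝ) (σX : Fin r → ℝ) (VX : Matrix (Fin n) (Fin r) ℝ)
    (hsvd : IsSkinnySVD X UX σX VX)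
    (Z : Matrix (Fin n) (Fin n) ℝ) (L : Matrix (Fin m) (Fin m) ℝ) :
    (X = X * Z + L * X ∧
      ∀ (Z' : Matrix (Fin n) (Fin n) ℝ) (L' : Matrix (Fin m) (Fin m) ℝ),
        X = X * Z' + L' * X → Z.rank + L.rank ≤ Z'.rank + L'.rank)
    ↔ ∃ (W : Matrix (Fin r) (Fin r) ℝ) (S₁ : Matrix (Fin n) (Fin r) ℝ)
        (S₂ : Matrix (Fin r) (Fin m) ℝ),
        W * W = W ∧ VXᵀ * S₁ = 0 ∧ S₂ * UX = 0 ∧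
        S₁.rank ≤ W.rank ∧ S₂.rank ≤ (1 - W).rank ∧
        Z = VX * W * VXᵀ + S₁ * W * VXᵀ ∧
        L = UX * Matrix.diagonal σX * (1 - W) * (Matrix.diagonal σX)⁻¹ * UXᵀ +
            UX * Matrix.diagonal σX * (1 - W) * S₂ := by
  obtain ⟨hU, hV, hσ, rfl, hr⟩ := hsvd
  have hS : IsUnit (diagonal σX).det := by
    rw [det_diagonal, isUnit_iff_ne_zero]
    exact Finset.prod_ne_zero_iff.mpr fun i _ => (hσ i).ne'
  constructor
  · rintro ⟨hfeas, hopt⟩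
    refine exists_latLRR_form_of_eq_mul_add_mul hU hS hV hfeas ?_
    have hproj : UX * diagonal σX * VXᵀ = UX * diagonal σX * VXᵀ * (VX * VXᵀ) +
        (0 : Matrix (Fin m) (Fin m) ℝ) * (UX * diagonal σX * VXᵀ) := by
      rw [Matrix.zero_mul, add_zero, Matrix.mul_assoc _ VXᵀ, ← Matrix.mul_assoc VXᵀ, hV,
        Matrix.one_mul]
    calc Z.rank + L.rank ≤ (VX * VXᵀ).rank + (0 : Matrix (Fin m) (Fin m) ℝ).rank :=
          hopt _ _ hproj
      _ ≤ Fintype.card (Fin r) := by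
          simpa using (rank_mul_le_left VX VXᵀ).trans VX.rank_le_card_width
  · rintro ⟨W, S₁, S₂, hW, hS₁, hS₂, -, -, rfl, rfl⟩
    refine ⟨eq_mul_add_mul_of_latLRR_form hU hS hV W hS₁ hS₂, fun Z' L' h => ?_⟩
    calc _ ≤ Fintype.card (Fin r) := rank_add_rank_le_of_latLRR_form hW S₁ S₂
      _ = (UX * diagonal σX * VXᵀ).rank := by rw [Fintype.card_fin]; exact hr
      _ ≤ Z'.rank + L'.rank := rank_le_rank_add_rank_of_eq_mul_add_mul h

/-- Complete solutions to the original LatLRR problem: `(Z, L)` is optimal iff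
`Z = V_X W̃ V_Xᵀ + S₁ W̃ V_Xᵀ` and `L = U_X Σ_X (I − W̃) Σ_X⁻¹ U_Xᵀ + U_X Σ_X (I − W̃) S₂`
for some idempotent `W̃` and matrices `S₁, S₂` with `V_Xᵀ S₁ = 0`, `S₂ U_X = 0`,
`rank S₁ ≤ rank W̃`, `rank S₂ ≤ rank (I − W̃)`. -/
theorem stmt6 {m n r : ℕ} (X : Matrix (Fin m) (Fin n) ℝ) (hX : X ≠ 0)
    (UX : Matrix (Fin m) (Fin r) ℝ) (σX : Fin r → ℝ) (VX : Matrix (Fin n) (Fin r) ℝ)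
    (hsvd : IsSkinnySVD X UX σX VX)
    (Z : Matrix (Fin n) (Fin n) ℝ) (L : Matrix (Fin m) (Fin m) ℝ) :
    (X = X * Z + L * X ∧
      ∀ (Z' : Matrix (Fin n) (Fin n) ℝ) (L' : Matrix (Fin m) (Fin m) ℝ),
        X = X * Z' + L' * X → Z.rank + L.rank ≤ Z'.rank + L'.rank)
    ↔ ∃ (W : Matrix (Fin r) (Fin r) ℝ) (S₁ : Matrix (Fin n) (Fin r) ℝ)
        (S₂ : Matrix (Fin r) (Fin m) ℝ),
        W * W = W ∧ VXᵀ * S₁ = 0 ∧ S₂ * UX = 0 ∧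
        S₁.rank ≤ W.rank ∧ S₂.rank ≤ (1 - W).rank ∧
        Z = VX * W * VXᵀ + S₁ * W * VXᵀ ∧
        L = UX * Matrix.diagonal σX * (1 - W) * (Matrix.diagonal σX)⁻¹ * UXᵀ +
            UX * Matrix.diagonal σX * (1 - W) * S₂ :=
  stmt6_general X UX σX VX hsvd Z L
end

section
/- The matrix Z* = (1/2) X† X attains the minimum of f(Z) = ‖Z‖_* + ‖X (I − Z) X†‖_* over all n×n matrices Z, and f(Z*) = rank(X). -/
/-!
Both `P * X` and `X * P` are orthogonal projections, of trace `rank X`. For an orthogonal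
projection `Q` and `c ≥ 0` the matrix `(c • Q)ᵀ * (c • Q) = c² • Q` has eigenvalues `0` and `c²`
only, so `‖c • Q‖_* = c * tr Q`; since `X (1 - c P X) P = (1 - c) X P`, this gives the value at
`Z* = ½ P X`. For the lower bound, `tr (Q B) ≤ ‖B‖_*` for every orthogonal projection `Q`:
evaluate the trace in an orthonormal eigenbasis `vᵢ` of `Bᵀ B`, where
`vᵢ ⬝ Q B vᵢ = Q vᵢ ⬝ B vᵢ ≤ ‖Q vᵢ‖ ‖B vᵢ‖ ≤ √λᵢ`. Applied to `P X` and `Z` and to `X P` and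
`X (1 - Z) P = X P (X (1 - Z) P)` it gives
`‖Z‖_* + ‖X (1 - Z) P‖_* ≥ tr (P X Z) + tr (P X (1 - Z)) = tr (P X) = rank X`.
-/

open Matrix

section

variable {k : Type*} [Fintype k]

lemma dotProduct_le_sqrt_mul_sqrt (u w : k → ℝ) : u ⬝ᵥ w ≤ √(u ⬝ᵥ u) * √(w ⬝ᵥ w) := by
  simpa [dotProduct, sq] using Real.sum_mul_le_sqrt_mul_sqrt Finset.univ u w

lemma OrthonormalBasis.dotProduct_self_eq_one (b : OrthonormalBasis k ℝ (EuclideanSpace ℝ k))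
    (i : k) : ⇑(b i) ⬝ᵥ ⇑(b i) = 1 := by
  have h := real_inner_self_eq_norm_sq (b i)
  rw [b.orthonormal.1 i, EuclideanSpace.inner_eq_star_dotProduct] at h
  simpa using h

namespace IsStarProjection

variable {Q : Matrix k k ℝ}

lemma transpose_eq (hQ : IsStarProjection Q) : Qᵀ = Q := by
  rw [← conjTranspose_eq_transpose_of_trivial]
  exact hQ.isSelfAdjoint

lemma isHermitian (hQ : IsStarProjection Q) : Q.IsHermitian := hQ.isSelfAdjoint

lemma dotProduct_mulVec_comm (hQ : IsStarProjection Q) (v w : k → ℝ) :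
    v ⬝ᵥ (Q *ᵥ w) = (Q *ᵥ v) ⬝ᵥ w := by
  rw [← hQ.transpose_eq, dotProduct_transpose_mulVec, dotProduct_comm, hQ.transpose_eq]

lemma mulVec_dotProduct_mulVec_self (hQ : IsStarProjection Q) (v : k → ℝ) :
    (Q *ᵥ v) ⬝ᵥ (Q *ᵥ v) = v ⬝ᵥ (Q *ᵥ v) := by
  rw [← hQ.dotProduct_mulVec_comm, mulVec_mulVec, hQ.isIdempotentElem.eq]

end IsStarProjection

variable [DecidableEq k]

lemma trace_eq_sum_dotProduct_mulVec (b : OrthonormalBasis k ℝ (EuclideanSpace ℝ k))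
    (M : Matrix k k ℝ) : M.trace = ∑ i, ⇑(b i) ⬝ᵥ (M *ᵥ ⇑(b i)) := by
  have := LinearMap.trace_eq_sum_inner (toLpLin 2 2 M) b
  rw [show toLpLin 2 2 M = (WithLp.linearEquiv 2 ℝ (k → ℝ)).symm.conj (toLin' M) from rfl,
    LinearMap.trace_conj', trace_toLin'_eq] at this
  simpa [EuclideanSpace.inner_eq_star_dotProduct, dotProduct_comm] using this

lemma Matrix.IsHermitian.eigenvalues_eq_zero_or_eq_of_mul_self_eq_smul {S : Matrix k k ℝ}
    (hS : S.IsHermitian) {c : ℝ} (h : S * S = c • S) (i : k) :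
    hS.eigenvalues i = 0 ∨ hS.eigenvalues i = c := by
  set v := ⇑(hS.eigenvectorBasis i)
  have hv : v ≠ 0 := by simpa [v] using hS.eigenvectorBasis.orthonormal.ne_zero i
  have hSv := hS.mulVec_eigenvectorBasis i
  have hSSv : (hS.eigenvalues i * hS.eigenvalues i) • v = (c * hS.eigenvalues i) • v := by
    rw [← smul_smul, ← hSv, ← mulVec_smul, ← hSv, mulVec_mulVec, h, smul_mulVec, hSv, smul_smul]
  have hsq := smul_left_injective ℝ hv hSSv
  rcases mul_eq_zero.mp (show hS.eigenvalues i * (hS.eigenvalues i - c) = 0 by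
    linear_combination hsq) with h0 | hc
  · exact .inl h0
  · exact .inr (sub_eq_zero.mp hc)

lemma eigenvalues_conjTranspose_mul_self_eq_dotProduct {l : Type*} [Fintype l]
    (B : Matrix l k ℝ) (i : k) :
    (isHermitian_conjTranspose_mul_self B).eigenvalues i =
      (B *ᵥ ⇑((isHermitian_conjTranspose_mul_self B).eigenvectorBasis i)) ⬝ᵥ
        (B *ᵥ ⇑((isHermitian_conjTranspose_mul_self B).eigenvectorBasis i)) := by
  set hS := isHermitian_conjTranspose_mul_self B
  rw [dotProduct_comm, ← dotProduct_transpose_mulVec, mulVec_mulVec,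
    ← conjTranspose_eq_transpose_of_trivial, hS.mulVec_eigenvectorBasis, dotProduct_smul,
    hS.eigenvectorBasis.dotProduct_self_eq_one, smul_eq_mul, mul_one]

namespace IsStarProjection

variable {Q : Matrix k k ℝ}

lemma mulVec_dotProduct_mulVec_self_le (hQ : IsStarProjection Q) (v : k → ℝ) :
    (Q *ᵥ v) ⬝ᵥ (Q *ᵥ v) ≤ v ⬝ᵥ v := by
  have hsplit : v ⬝ᵥ v = v ⬝ᵥ (Q *ᵥ v) + v ⬝ᵥ ((1 - Q) *ᵥ v) := by
    rw [← dotProduct_add, ← add_mulVec, add_sub_cancel, one_mulVec]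
  rw [hsplit, hQ.mulVec_dotProduct_mulVec_self, ← hQ.one_sub.mulVec_dotProduct_mulVec_self]
  exact le_add_of_nonneg_right (dotProduct_self_star_nonneg _)

lemma trace_eq_rank (hQ : IsStarProjection Q) : Q.trace = Q.rank := by
  have hH := hQ.isHermitian
  have h01 := hH.eigenvalues_eq_zero_or_eq_of_mul_self_eq_smul
    (by rw [one_smul]; exact hQ.isIdempotentElem.eq)
  rw [hH.trace_eq_sum_eigenvalues, hH.rank_eq_card_non_zero_eigs, Fintype.card_subtype]
  simp only [RCLike.ofReal_real_eq_id, id_eq]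
  rw [← Finset.sum_filter_ne_zero,
    Finset.sum_congr rfl fun i hi => (h01 i).resolve_left (Finset.mem_filter.mp hi).2]
  simp

lemma nuclearNorm_smul (hQ : IsStarProjection Q) {c : ℝ} (hc : 0 ≤ c) :
    nuclearNorm (c • Q) = c * Q.trace := by
  set hS := isHermitian_conjTranspose_mul_self (c • Q)
  have hcQ : (c • Q)ᴴ * (c • Q) = c ^ 2 • Q := by
    rw [conjTranspose_smul, star_trivial, hQ.isHermitian.eq, smul_mul_smul_comm,
      hQ.isIdempotentElem.eq, sq]
  have h0c := hS.eigenvalues_eq_zero_or_eq_of_mul_self_eq_smul (c := c ^ 2) (by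
    rw [hcQ, smul_mul_smul_comm, hQ.isIdempotentElem.eq, smul_smul])
  -- also for `c = 0`: then every eigenvalue is `0`, and `0 / 0 = 0`
  have hsqrt (i : k) : √(hS.eigenvalues i) = hS.eigenvalues i / c := by
    rcases h0c i with h | h <;> rw [h]
    · simp
    · rw [Real.sqrt_sq hc, sq, mul_self_div_self]
  calc nuclearNorm (c • Q) = ∑ i, hS.eigenvalues i / c := Finset.sum_congr rfl fun i _ => hsqrt i
    _ = ((c • Q)ᴴ * (c • Q)).trace / c := by
      rw [← Finset.sum_div, hS.trace_eq_sum_eigenvalues]; simp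
    _ = c * Q.trace := by
      rw [hcQ, trace_smul, smul_eq_mul, sq, mul_div_right_comm, mul_self_div_self]

lemma trace_mul_le_nuclearNorm (hQ : IsStarProjection Q) (B : Matrix k k ℝ) :
    (Q * B).trace ≤ nuclearNorm B := by
  set hS := isHermitian_conjTranspose_mul_self B
  calc (Q * B).trace
        = ∑ i, (Q *ᵥ ⇑(hS.eigenvectorBasis i)) ⬝ᵥ (B *ᵥ ⇑(hS.eigenvectorBasis i)) := by
        rw [trace_eq_sum_dotProduct_mulVec hS.eigenvectorBasis]
        simp_rw [← mulVec_mulVec, hQ.dotProduct_mulVec_comm]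
    _ ≤ ∑ i, √(hS.eigenvalues i) := Finset.sum_le_sum fun i _ => by
        refine (dotProduct_le_sqrt_mul_sqrt _ _).trans ?_
        rw [eigenvalues_conjTranspose_mul_self_eq_dotProduct]
        refine mul_le_of_le_one_left (Real.sqrt_nonneg _) (Real.sqrt_le_one.mpr ?_)
        exact (hQ.mulVec_dotProduct_mulVec_self_le _).trans_eq
          (hS.eigenvectorBasis.dotProduct_self_eq_one i)

end IsStarProjection

end

namespace IsMoorePenroseInv

variable {m n : Type*} [Fintype m] [Fintype n] {X : Matrix m n ℝ} {P : Matrix n m ℝ}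

lemma isStarProjection_pinv_mul (hP : IsMoorePenroseInv X P) : IsStarProjection (P * X) :=
  ⟨by rw [IsIdempotentElem, ← Matrix.mul_assoc, hP.2.1],
    by rw [IsSelfAdjoint, star_eq_conjTranspose, conjTranspose_eq_transpose_of_trivial, hP.2.2.2]⟩

lemma isStarProjection_mul_pinv (hP : IsMoorePenroseInv X P) : IsStarProjection (X * P) :=
  ⟨by rw [IsIdempotentElem, ← Matrix.mul_assoc, hP.1],
    by rw [IsSelfAdjoint, star_eq_conjTranspose, conjTranspose_eq_transpose_of_trivial, hP.2.2.1]⟩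

lemma rank_pinv_mul (hP : IsMoorePenroseInv X P) : (P * X).rank = X.rank := by
  refine le_antisymm (rank_mul_le_right P X) ?_
  calc X.rank = (X * P * X).rank := by rw [hP.1]
    _ ≤ (P * X).rank := by rw [Matrix.mul_assoc]; exact rank_mul_le_right X (P * X)

lemma trace_pinv_mul [DecidableEq n] (hP : IsMoorePenroseInv X P) : (P * X).trace = X.rank := by
  rw [hP.isStarProjection_pinv_mul.trace_eq_rank, hP.rank_pinv_mul]

lemma mul_one_sub_smul_pinv_mul_mul [DecidableEq n] (hP : IsMoorePenroseInv X P) (c : ℝ) :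
    X * (1 - c • (P * X)) * P = (1 - c) • (X * P) := by
  rw [Matrix.mul_sub, Matrix.mul_one, Matrix.mul_smul, ← Matrix.mul_assoc, hP.1, Matrix.sub_mul,
    Matrix.smul_mul, sub_smul, one_smul]

lemma trace_pinv_mul_eq_add [DecidableEq n] (hP : IsMoorePenroseInv X P) (Z : Matrix n n ℝ) :
    (P * X).trace = (P * X * Z).trace + (X * P * (X * (1 - Z) * P)).trace := by
  rw [← Matrix.mul_assoc, ← Matrix.mul_assoc, hP.1, trace_mul_comm (X * (1 - Z)) P,
    ← Matrix.mul_assoc, ← trace_add, ← Matrix.mul_add, add_sub_cancel, Matrix.mul_one]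

end IsMoorePenroseInv

theorem stmt11_general {m n : ℕ} (X : Matrix (Fin m) (Fin n) ℝ)
    (P : Matrix (Fin n) (Fin m) ℝ) (hP : IsMoorePenroseInv X P) :
    nuclearNorm (((1 : ℝ)/2) • (P * X)) +
        nuclearNorm (X * (1 - ((1 : ℝ)/2) • (P * X)) * P) = (X.rank : ℝ) ∧
    ∀ Z : Matrix (Fin n) (Fin n) ℝ,
      nuclearNorm (((1 : ℝ)/2) • (P * X)) +
          nuclearNorm (X * (1 - ((1 : ℝ)/2) • (P * X)) * P)
        ≤ nuclearNorm Z + nuclearNorm (X * (1 - Z) * P) := by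
  have hPX := hP.isStarProjection_pinv_mul
  have hXP := hP.isStarProjection_mul_pinv
  have hvalue : nuclearNorm (((1 : ℝ)/2) • (P * X)) +
      nuclearNorm (X * (1 - ((1 : ℝ)/2) • (P * X)) * P) = (X.rank : ℝ) := by
    rw [hP.mul_one_sub_smul_pinv_mul_mul, hPX.nuclearNorm_smul (by norm_num),
      hXP.nuclearNorm_smul (by norm_num), trace_mul_comm X P, hP.trace_pinv_mul]
    ring
  refine ⟨hvalue, fun Z => ?_⟩
  rw [hvalue, ← hP.trace_pinv_mul, hP.trace_pinv_mul_eq_add Z]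
  exact add_le_add (hPX.trace_mul_le_nuclearNorm Z) (hXP.trace_mul_le_nuclearNorm _)

/-- `Z* = (1/2) X† X` attains the minimum of `f(Z) = ‖Z‖_* + ‖X (I − Z) X†‖_*`,
and `f(Z*) = rank X`. -/
theorem stmt11 {m n : ℕ} (X : Matrix (Fin m) (Fin n) ℝ) (hX : X ≠ 0)
    (P : Matrix (Fin n) (Fin m) ℝ) (hP : IsMoorePenroseInv X P) :
    nuclearNorm (((1 : ℝ)/2) • (P * X)) +
        nuclearNorm (X * (1 - ((1 : ℝ)/2) • (P * X)) * P) = (X.rank : ℝ) ∧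
    ∀ Z : Matrix (Fin n) (Fin n) ℝ,
      nuclearNorm (((1 : ℝ)/2) • (P * X)) +
          nuclearNorm (X * (1 - ((1 : ℝ)/2) • (P * X)) * P)
        ≤ nuclearNorm Z + nuclearNorm (X * (1 - Z) * P) :=
  stmt11_general X P hP
end
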